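/- Let d be an odd prime, n ≥ 1, Γ a symmetric n×n matrix over ZMod d with zero diagonal, ω : ℂ a primitive d-th root of unity, and ψ_Γ the graph-state amplitude function. Fix w : Fin n and γ : ZMod d. Define single-qudit matrices in Matrix (ZMod d) (ZMod d) ℂ: the Fourier matrix H with entries H j k = d^(−1/2)·ω^(−j·k), the diagonal matrix P^γ with diagonal entries ω^(γ·2⁻¹·k·(k−1)) (2⁻¹ the inverse of 2 in ZMod d), and, for each v ≠ w, the diagonal matrix D_v with diagonal entries ω^(−γ·2⁻¹·(Γ v w · k)·(Γ v w · k − 1)). For a single-qudit matrix A and a site v, let A act at site v on ψ : (Fin n → ZMod d) → ℂ by (A ·_v ψ)(x) = Σ_k A (x v) k · ψ(Function.update x v k). Then ψ_{Γ ⋆_γ w} equals the result of applying Hᴴ · P^γ · H at site w and applying D_v at each site v ≠ w to ψ_Γ; i.e., local complementation acts on the graph state by a product of single-qudit (generalized local Clifford) operators. -/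

import Mathlib

open scoped Matrix

/-- The graph-state amplitude function of an adjacency matrix `Γ` over `ZMod d`. -/
noncomputable def graphState (d n : ℕ) (ω : ℂ) (Γ : Matrix (Fin n) (Fin n) (ZMod d)) :
    (Fin n → ZMod d) → ℂ := fun x =>
  (((d : ℝ) ^ (-(n : ℝ) / 2) : ℝ) : ℂ) *
    ω ^ (∑ u : Fin n, ∑ v : Fin n, if u < v then Γ u v * x u * x v else 0).val

/-- The `γ`-local complementation of `Γ` about the vertex `w`. -/
def localComp {d n : ℕ} (Γ : Matrix (Fin n) (Fin n) (ZMod d)) (γ : ZMod d) (w : Fin n) :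
    Matrix (Fin n) (Fin n) (ZMod d) :=
  Matrix.of fun u v => if u ≠ v then Γ u v + γ * Γ u w * Γ v w else Γ u v

/-- The qudit Fourier matrix `H j k = d^(-1/2) · ω^(-j·k)`. -/
noncomputable def qFourier (d : ℕ) (ω : ℂ) : Matrix (ZMod d) (ZMod d) ℂ :=
  Matrix.of fun j k => (((d : ℝ) ^ (-(1 : ℝ) / 2) : ℝ) : ℂ) * ω ^ (-(j * k)).val

/-- The diagonal phase gate `P^γ` with entries `ω^(γ·2⁻¹·k·(k-1))`. -/
noncomputable def phaseGateP (d : ℕ) (ω : ℂ) (γ : ZMod d) : Matrix (ZMod d) (ZMod d) ℂ :=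
  Matrix.diagonal fun k => ω ^ (γ * (2 : ZMod d)⁻¹ * k * (k - 1)).val

/-! Write `ψ_Γ(x) = d^(-n/2) e(Q_Γ(x))`, where `e(a) = ω^a` is an additive character of `ZMod d`
and `Q_Γ(x) = ∑_{u<v} Γ u v x_u x_v`. Put `t_v = Γ v w x_v` and `S = ∑_v t_v`. Local
complementation adds `γ ∑_{u<v} t_u t_v = γ 2⁻¹ (S² - ∑_v t_v²)` to the phase, and `Q_Γ` is affine
in `x_w` with slope `S`. The gates `D_v` supply the terms `-γ 2⁻¹ t_v (t_v - 1)`; what remains,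
`x_w S + γ 2⁻¹ S (S - 1)`, is produced at site `w` because `m ↦ e(m S)` is an eigenvector of
`Hᴴ P^γ H` with eigenvalue `e(γ 2⁻¹ S (S - 1))`: the Fourier matrix maps it to a multiple of the
basis vector at `S`. -/

open Finset Function Matrix

theorem AddChar.map_sum_eq_prod {ι A M : Type*} [AddCommMonoid A] [CommMonoid M]
    (ψ : AddChar A M) (s : Finset ι) (f : ι → A) :
    ψ (∑ i ∈ s, f i) = ∏ i ∈ s, ψ (f i) := by
  classical
  induction s using Finset.induction_on with
  | empty => simp
  | insert i s hi ih => rw [sum_insert hi, prod_insert hi, map_add_eq_mul, ih]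

section PairSums

variable {ι : Type*} [Fintype ι] [LinearOrder ι]

theorem sum_sum_eq_sum_sum_lt_add_sum_diag {M : Type*} [AddCommMonoid M] (g : ι → ι → M) :
    ∑ u, ∑ v, g u v = ∑ u, ∑ v, (if u < v then g u v + g v u else 0) + ∑ u, g u u := by
  have htri : ∀ u v, g u v = (if u < v then g u v else 0) + (if v < u then g u v else 0)
      + (if u = v then g u v else 0) := by
    intro u v
    rcases lt_trichotomy u v with h | rfl | h
    · simp [h, h.not_gt, h.ne]
    · simp
    · simp [h, h.not_gt, h.ne']
  have hswap : ∑ u, ∑ v, (if v < u then g u v else 0)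
      = ∑ u, ∑ v, (if u < v then g v u else 0) := Finset.sum_comm
  rw [sum_congr rfl fun u _ => sum_congr rfl fun v _ => htri u v]
  simp only [sum_add_distrib, hswap, ite_add_zero, sum_ite_eq, mem_univ, if_true]

theorem sq_sum_eq_two_mul_sum_sum_lt_add_sum_sq {R : Type*} [CommSemiring R] (t : ι → R) :
    (∑ u, t u) ^ 2 = 2 * ∑ u, ∑ v, (if u < v then t u * t v else 0) + ∑ u, t u ^ 2 := by
  rw [sq, sum_mul_sum, sum_sum_eq_sum_sum_lt_add_sum_diag]
  simp only [mul_sum, sq]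
  congr 1
  refine sum_congr rfl fun u _ => sum_congr rfl fun v _ => ?_
  split_ifs <;> ring

def graphPhase {R : Type*} [Semiring R] (Γ : Matrix ι ι R) (x : ι → R) : R :=
  ∑ u, ∑ v, if u < v then Γ u v * x u * x v else 0

theorem graphPhase_update {R : Type*} [CommSemiring R] [DecidableEq ι] {Γ : Matrix ι ι R}
    (hΓ : Γ.IsSymm) (hdiag : ∀ u, Γ u u = 0) (x : ι → R) (w : ι) (a : R) :
    graphPhase Γ (update x w a) = graphPhase Γ (update x w 0) + a * ∑ v, Γ v w * x v := by
  set g : ι → ι → R := fun u v => if u = w then Γ v w * x v else 0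
  have hterm : ∀ u v, (if u < v then Γ u v * update x w a u * update x w a v else 0)
      = (if u < v then Γ u v * update x w 0 u * update x w 0 v else 0)
        + a * (if u < v then g u v + g v u else 0) := by
    intro u v
    split_ifs with huv
    · by_cases hu : u = w
      · subst hu
        simp only [g, update_self, update_of_ne huv.ne', hΓ.apply u v, if_neg huv.ne', mul_zero,
          zero_mul, add_zero, zero_add, if_true]
        ring
      · by_cases hv : v = w
        · subst hv
          simp only [g, update_self, update_of_ne hu, if_neg hu, if_true, mul_zero, zero_add]
          ring
        · simp [g, hu, hv]
    · simp
  have hg : ∑ u, ∑ v, g u v = ∑ v, Γ v w * x v := by simp [g]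
  have hgdiag : ∑ u, g u u = 0 := by simp [g, hdiag]
  simp only [graphPhase, hterm, sum_add_distrib, ← mul_sum]
  rw [← hg, sum_sum_eq_sum_sum_lt_add_sum_diag g, hgdiag, add_zero]

end PairSums

theorem graphPhase_localComp {d n : ℕ} (Γ : Matrix (Fin n) (Fin n) (ZMod d)) (γ : ZMod d)
    (w : Fin n) (x : Fin n → ZMod d) :
    graphPhase (localComp Γ γ w) x
      = graphPhase Γ x + γ * ∑ u, ∑ v, if u < v then Γ u w * x u * (Γ v w * x v) else 0 := by
  simp only [graphPhase, mul_sum, ← sum_add_distrib]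
  refine sum_congr rfl fun u _ => sum_congr rfl fun v _ => ?_
  split_ifs with huv
  · simp only [localComp, of_apply, ne_eq, huv.ne, not_false_eq_true, if_true]
    ring
  · simp

theorem graphPhase_localComp_eq_local_phases {d n : ℕ} (hd : Odd d)
    {Γ : Matrix (Fin n) (Fin n) (ZMod d)} (hΓ : Γ.IsSymm) (hdiag : ∀ u, Γ u u = 0)
    (γ : ZMod d) (w : Fin n) (x : Fin n → ZMod d) :
    graphPhase (localComp Γ γ w) x
      = ∑ v, -(γ * 2⁻¹ * (Γ v w * x v) * (Γ v w * x v - 1))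
        + (x w * ∑ v, Γ v w * x v
          + γ * 2⁻¹ * (∑ v, Γ v w * x v) * ((∑ v, Γ v w * x v) - 1))
        + graphPhase Γ (update x w 0) := by
  have h2 : (2 : ZMod d) * 2⁻¹ = 1 := ZMod.mul_inv_of_unit 2 <| by
    exact_mod_cast (ZMod.isUnit_iff_coprime 2 d).mpr (Nat.coprime_two_left.mpr hd)
  have hQ := graphPhase_update hΓ hdiag x w (x w)
  rw [update_eq_self] at hQ
  set t : Fin n → ZMod d := fun v => Γ v w * x v
  have hsq := sq_sum_eq_two_mul_sum_sum_lt_add_sum_sq t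
  have hD : ∑ v, -(γ * 2⁻¹ * t v * (t v - 1)) = γ * 2⁻¹ * (∑ v, t v - ∑ v, t v ^ 2) := by
    rw [mul_sub, mul_sum, mul_sum, ← sum_sub_distrib]
    exact sum_congr rfl fun v _ => by ring
  rw [graphPhase_localComp, hQ, hD]
  linear_combination (-(γ * 2⁻¹)) * hsq
    - γ * (∑ u, ∑ v, if u < v then t u * t v else 0) * h2

theorem sum_prod_apply_mul_eq_of_isDiag {ι α R : Type*} [Fintype ι] [DecidableEq ι] [Fintype α]
    [CommSemiring R] (A : ι → Matrix α α R) (w : ι) (hA : ∀ j ≠ w, (A j).IsDiag)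
    (f : (ι → α) → R) (x : ι → α) :
    ∑ y, (∏ j, A j (x j) (y j)) * f y
      = (∏ j ∈ univ.erase w, A j (x j) (x j)) * ∑ m, A w (x w) m * f (update x w m) := by
  rw [mul_sum]
  refine (Fintype.sum_of_injective (update x w) (update_injective x w) _ _ ?_ ?_).symm
  · intro y hy
    obtain ⟨j, hjw, hjy⟩ : ∃ j ≠ w, x j ≠ y j := by
      by_contra! h
      exact hy ⟨y w, update_eq_iff.mpr ⟨rfl, h⟩⟩
    rw [prod_eq_zero (mem_univ j) (hA j hjw hjy), zero_mul]
  · intro m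
    rw [← mul_prod_erase univ _ (mem_univ w), update_self]
    have hrest : ∏ j ∈ univ.erase w, A j (x j) (update x w m j)
        = ∏ j ∈ univ.erase w, A j (x j) (x j) :=
      prod_congr rfl fun j hj => by rw [update_of_ne (ne_of_mem_erase hj)]
    rw [hrest]
    ring

section Qudit

variable {d : ℕ} [NeZero d] {ω : ℂ}

theorem graphState_eq_mul_zmodChar {n : ℕ} (h1 : ω ^ d = 1)
    (Γ : Matrix (Fin n) (Fin n) (ZMod d)) (x : Fin n → ZMod d) :
    graphState d n ω Γ x
      = (((d : ℝ) ^ (-(n : ℝ) / 2) : ℝ) : ℂ) * AddChar.zmodChar d h1 (graphPhase Γ x) :=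
  rfl

theorem graphState_update {n : ℕ} (h1 : ω ^ d = 1) {Γ : Matrix (Fin n) (Fin n) (ZMod d)}
    (hΓ : Γ.IsSymm) (hdiag : ∀ u, Γ u u = 0) (x : Fin n → ZMod d) (w : Fin n) (m : ZMod d) :
    graphState d n ω Γ (update x w m)
      = graphState d n ω Γ (update x w 0) * AddChar.zmodChar d h1 (m * ∑ v, Γ v w * x v) := by
  rw [graphState_eq_mul_zmodChar h1, graphState_eq_mul_zmodChar h1, graphPhase_update hΓ hdiag,
    AddChar.map_add_eq_mul, mul_assoc]

theorem qFourier_mulVec_zmodChar (hω : IsPrimitiveRoot ω d) (s : ZMod d) :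
    qFourier d ω *ᵥ (fun m => AddChar.zmodChar d hω.pow_eq_one (m * s))
      = Pi.single s ((((d : ℝ) ^ (-(1 : ℝ) / 2) : ℝ) : ℂ) * d) := by
  ext k
  have horth := AddChar.sum_mulShift (s - k)
    (AddChar.zmodChar_primitive_of_primitive_root d hω)
  have hterm : ∀ m, qFourier d ω k m * AddChar.zmodChar d hω.pow_eq_one (m * s)
      = (((d : ℝ) ^ (-(1 : ℝ) / 2) : ℝ) : ℂ) * AddChar.zmodChar d hω.pow_eq_one (m * (s - k)) := by
    intro m
    rw [mul_sub, sub_eq_neg_add, AddChar.map_add_eq_mul, mul_comm m k, ← mul_assoc]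
    rfl
  simp only [mulVec, dotProduct, hterm, ← mul_sum, horth, Pi.single_apply, sub_eq_zero, eq_comm,
    ZMod.card]
  split_ifs <;> simp

theorem conjTranspose_qFourier_apply (h1 : ω ^ d = 1) (j k : ZMod d) :
    (qFourier d ω)ᴴ j k
      = (((d : ℝ) ^ (-(1 : ℝ) / 2) : ℝ) : ℂ) * AddChar.zmodChar d h1 (j * k) := by
  have hconj : star (AddChar.zmodChar d h1 (-(k * j))) = AddChar.zmodChar d h1 (k * j) := by
    rw [AddChar.map_neg_eq_conj, Complex.star_def, Complex.conj_conj]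
  rw [conjTranspose_apply, mul_comm j k, ← hconj, qFourier, of_apply, star_mul',
    Complex.star_def, Complex.conj_ofReal]
  rfl

theorem qFourier_conj_diagonal_mulVec_zmodChar (hω : IsPrimitiveRoot ω d)
    (p : ZMod d → ℂ) (s : ZMod d) :
    ((qFourier d ω)ᴴ * diagonal p * qFourier d ω) *ᵥ
        (fun m => AddChar.zmodChar d hω.pow_eq_one (m * s))
      = p s • fun m => AddChar.zmodChar d hω.pow_eq_one (m * s) := by
  have hscale :
      (((d : ℝ) ^ (-(1 : ℝ) / 2) : ℝ) : ℂ) * ((((d : ℝ) ^ (-(1 : ℝ) / 2) : ℝ) : ℂ) * d) = 1 := by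
    have hd : (0 : ℝ) < d := by exact_mod_cast Nat.pos_of_neZero d
    rw [← mul_assoc, ← Complex.ofReal_mul, ← Real.rpow_add hd]
    norm_num [Real.rpow_neg_one, hd.ne']
  ext a
  rw [← mulVec_mulVec, qFourier_mulVec_zmodChar hω, ← mulVec_mulVec, diagonal_mulVec_single,
    mulVec_single]
  simp only [Pi.smul_apply, col_apply, MulOpposite.smul_eq_mul_unop, MulOpposite.unop_op,
    conjTranspose_qFourier_apply hω.pow_eq_one, smul_eq_mul]
  linear_combination (p s * AddChar.zmodChar d hω.pow_eq_one (a * s)) * hscale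

end Qudit

theorem graphState_localComp_clifford
    (d n : ℕ) (hodd : Odd d) [NeZero d]
    (ω : ℂ) (hω : IsPrimitiveRoot ω d)
    (Γ : Matrix (Fin n) (Fin n) (ZMod d)) (hΓsymm : Γ.IsSymm) (hΓdiag : ∀ u, Γ u u = 0)
    (w : Fin n) (γ : ZMod d)
    (A : Fin n → Matrix (ZMod d) (ZMod d) ℂ)
    (hAw : A w = (qFourier d ω)ᴴ * phaseGateP d ω γ * qFourier d ω)
    (hAv : ∀ v, v ≠ w → A v = Matrix.diagonal fun k =>
      ω ^ (-(γ * (2 : ZMod d)⁻¹ * (Γ v w * k) * (Γ v w * k - 1))).val) :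
    ∀ x, graphState d n ω (localComp Γ γ w) x
      = ∑ y : Fin n → ZMod d, (∏ j, A j (x j) (y j)) * graphState d n ω Γ y := by
  intro x
  set ψ := AddChar.zmodChar d hω.pow_eq_one
  set S := ∑ v, Γ v w * x v
  have hdiagonal : ∏ j ∈ univ.erase w, A j (x j) (x j)
      = ψ (∑ v, -(γ * 2⁻¹ * (Γ v w * x v) * (Γ v w * x v - 1))) := by
    rw [← sum_erase univ (a := w) (by simp [hΓdiag]), AddChar.map_sum_eq_prod]
    refine prod_congr rfl fun j hj => ?_
    rw [hAv j (ne_of_mem_erase hj), diagonal_apply_eq]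
    rfl
  have hsite : ∑ m, A w (x w) m * graphState d n ω Γ (update x w m)
      = graphState d n ω Γ (update x w 0) * (ψ (x w * S) * ψ (γ * 2⁻¹ * S * (S - 1))) := by
    have heigen : ∑ m, A w (x w) m * ψ (m * S) = ψ (γ * 2⁻¹ * S * (S - 1)) * ψ (x w * S) := by
      rw [hAw]
      exact congrFun (qFourier_conj_diagonal_mulVec_zmodChar hω _ S) (x w)
    rw [mul_comm (ψ (x w * S)), ← heigen, mul_sum]
    exact sum_congr rfl fun m _ => by
      rw [graphState_update hω.pow_eq_one hΓsymm hΓdiag, mul_left_comm]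
  rw [sum_prod_apply_mul_eq_of_isDiag A w (fun j hj => hAv j hj ▸ isDiag_diagonal _),
    hdiagonal, hsite, graphState_eq_mul_zmodChar hω.pow_eq_one,
    graphState_eq_mul_zmodChar hω.pow_eq_one,
    graphPhase_localComp_eq_local_phases hodd hΓsymm hΓdiag,
    AddChar.map_add_eq_mul, AddChar.map_add_eq_mul, AddChar.map_add_eq_mul, mul_comm (x w)]
  ring
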